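/- (Proposition 5.) Let m ≥ 1, let ψ : ℝᵐ → ℝ be a measurable nonnegative function with ∫ ψ(ξ) dξ = 1 and ∫ ‖ξ‖ ψ(ξ) dξ < ∞ (Lebesgue measure), let x, y ∈ ℝᵐ and σ, σ' > 0. Define the states Ψ_{σ,x}(f) = ∫ f(σξ + x) ψ(ξ) dξ and Ψ_{σ',y}(f) = ∫ f(σ'ξ + y) ψ(ξ) dξ. Then sup{ Ψ_{σ,x}(f) − Ψ_{σ',y}(f) : f : ℝᵐ → ℝ 1-Lipschitz } = ∫ ‖x − y + (σ − σ')ξ‖ ψ(ξ) dξ. -/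

import Mathlib

/-!
For a 1-Lipschitz `f`, the integrand `f (σ • ξ + x) - f (σ' • ξ + y)` is pointwise at most
`‖x - y + (σ - σ') • ξ‖`, which bounds the supremum. A single 1-Lipschitz potential attains this
bound at every `ξ` at once: for `σ = σ'` a norming functional of `x - y`, and for `σ ≠ σ'` the
distance to the centre `α` of the homothety sending `σ' • ξ + y` to `σ • ξ + x` (negated if
`σ < σ'`), because `σ • ξ + x - α` and `σ' • ξ + y - α` are the nonnegative multiples `σ • w`,
`σ' • w` of one vector `w`.
-/

open MeasureTheory

section Potential

variable {E : Type*} [NormedAddCommGroup E]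

theorem lipschitzWith_one_iff_abs_sub_le {f : E → ℝ} :
    LipschitzWith 1 f ↔ ∀ x y, |f x - f y| ≤ ‖x - y‖ := by
  simp [lipschitzWith_iff_dist_le_mul, dist_eq_norm]

variable [NormedSpace ℝ E]

theorem exists_lipschitzWith_one_sub_eq_norm_of_lt (x y : E) {σ σ' : ℝ} (hσ' : 0 ≤ σ')
    (h : σ' < σ) :
    ∃ g : E → ℝ, LipschitzWith 1 g ∧
      ∀ ξ, g (σ • ξ + x) - g (σ' • ξ + y) = ‖x - y + (σ - σ') • ξ‖ := by
  have hd : σ - σ' ≠ 0 := (sub_pos.2 h).ne'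
  set α : E := (σ - σ')⁻¹ • (σ • y - σ' • x)
  refine ⟨fun z => ‖z - α‖, by simpa only [dist_eq_norm] using LipschitzWith.dist_left α,
    fun ξ => ?_⟩
  set w : E := ξ + (σ - σ')⁻¹ • (x - y)
  have hσw : σ • ξ + x - α = σ • w := by
    simp only [α, w]; match_scalars <;> field_simp; ring
  have hσ'w : σ' • ξ + y - α = σ' • w := by
    simp only [α, w]; match_scalars <;> field_simp; ring
  have hdw : x - y + (σ - σ') • ξ = (σ - σ') • w := by
    simp only [w]; match_scalars <;> field_simp
  change ‖σ • ξ + x - α‖ - ‖σ' • ξ + y - α‖ = _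
  rw [hσw, hσ'w, hdw, norm_smul, norm_smul, norm_smul, Real.norm_of_nonneg (hσ'.trans h.le),
    Real.norm_of_nonneg hσ', Real.norm_of_nonneg (sub_pos.2 h).le, sub_mul]

theorem exists_lipschitzWith_one_sub_eq_norm (x y : E) {σ σ' : ℝ} (hσ : 0 ≤ σ)
    (hσ' : 0 ≤ σ') :
    ∃ g : E → ℝ, LipschitzWith 1 g ∧
      ∀ ξ, g (σ • ξ + x) - g (σ' • ξ + y) = ‖x - y + (σ - σ') • ξ‖ := by
  rcases lt_trichotomy σ' σ with h | rfl | h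
  · exact exists_lipschitzWith_one_sub_eq_norm_of_lt x y hσ' h
  · obtain ⟨g, hg_norm, hg⟩ := exists_dual_vector'' ℝ (x - y)
    refine ⟨g, g.lipschitz.weaken hg_norm, fun ξ => ?_⟩
    simp [← map_sub, hg]
  · obtain ⟨g, hg, hg_eq⟩ := exists_lipschitzWith_one_sub_eq_norm_of_lt y x hσ h
    refine ⟨-g, hg.neg, fun ξ => ?_⟩
    rw [← norm_neg, Pi.neg_apply, Pi.neg_apply, neg_sub_neg, hg_eq]
    congr 1; match_scalars <;> ring

theorem LipschitzWith.comp_smul_add {K : NNReal} {f : E → ℝ} (hf : LipschitzWith K f) (c : ℝ)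
    (z : E) : LipschitzWith (K * ‖c‖₊) fun ξ => f (c • ξ + z) := by
  have := hf.comp ((lipschitzWith_smul c).add (LipschitzWith.const z))
  rwa [add_zero] at this

end Potential

section WavePacket

variable {E : Type*} [NormedAddCommGroup E] [MeasurableSpace E] [OpensMeasurableSpace E]
  {μ : Measure E} {ψ : E → ℝ}

theorem LipschitzWith.integrable_mul (hψ : Integrable ψ μ)
    (hψ_moment : Integrable (fun ξ => ‖ξ‖ * ψ ξ) μ) {K : NNReal} {g : E → ℝ}
    (hg : LipschitzWith K g) : Integrable (fun ξ => g ξ * ψ ξ) μ := by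
  refine ((hψ.norm.const_mul |g 0|).add (hψ_moment.norm.const_mul K)).mono'
    (hg.continuous.aestronglyMeasurable.mul hψ.aestronglyMeasurable) (.of_forall fun ξ => ?_)
  have hg_growth : |g ξ| ≤ |g 0| + K * ‖ξ‖ := by
    have := hg.dist_le_mul ξ 0
    rw [Real.dist_eq, dist_zero_right] at this
    linarith [abs_sub_abs_le_abs_sub (g ξ) (g 0)]
  calc ‖g ξ * ψ ξ‖ = |g ξ| * ‖ψ ξ‖ := by rw [norm_mul, Real.norm_eq_abs]
    _ ≤ (|g 0| + K * ‖ξ‖) * ‖ψ ξ‖ := by gcongr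
    _ = |g 0| * ‖ψ ξ‖ + K * ‖‖ξ‖ * ψ ξ‖ := by rw [norm_mul, norm_norm]; ring

variable [NormedSpace ℝ E]

variable (μ ψ) in
noncomputable def wavePacket (σ : ℝ) (x : E) (f : E → ℝ) : ℝ :=
  ∫ ξ, f (σ • ξ + x) * ψ ξ ∂μ

theorem wavePacket_sub_wavePacket (hψ : Integrable ψ μ)
    (hψ_moment : Integrable (fun ξ => ‖ξ‖ * ψ ξ) μ) {K : NNReal} {f : E → ℝ}
    (hf : LipschitzWith K f) (σ σ' : ℝ) (x y : E) :
    wavePacket μ ψ σ x f - wavePacket μ ψ σ' y f =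
      ∫ ξ, (f (σ • ξ + x) - f (σ' • ξ + y)) * ψ ξ ∂μ := by
  simp only [wavePacket, sub_mul]
  exact (integral_sub ((hf.comp_smul_add σ x).integrable_mul hψ hψ_moment)
    ((hf.comp_smul_add σ' y).integrable_mul hψ hψ_moment)).symm

theorem wavePacket_sub_wavePacket_le (hψ : Integrable ψ μ)
    (hψ_moment : Integrable (fun ξ => ‖ξ‖ * ψ ξ) μ) (hψ_nonneg : 0 ≤ ψ) {f : E → ℝ}
    (hf : LipschitzWith 1 f) (σ σ' : ℝ) (x y : E) :
    wavePacket μ ψ σ x f - wavePacket μ ψ σ' y f ≤ ∫ ξ, ‖x - y + (σ - σ') • ξ‖ * ψ ξ ∂μ := by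
  rw [wavePacket_sub_wavePacket hψ hψ_moment hf]
  have hnorm_int : Integrable (fun ξ => ‖x - y + (σ - σ') • ξ‖ * ψ ξ) μ := by
    simpa only [add_comm] using
      (lipschitzWith_one_norm.comp_smul_add (σ - σ') (x - y)).integrable_mul hψ hψ_moment
  refine integral_mono (((hf.comp_smul_add σ x).sub (hf.comp_smul_add σ' y)).integrable_mul
    hψ hψ_moment) hnorm_int fun ξ => ?_
  have hdiff : σ • ξ + x - (σ' • ξ + y) = x - y + (σ - σ') • ξ := by
    rw [sub_smul]; abel
  gcongr
  · exact hψ_nonneg ξ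
  · calc f (σ • ξ + x) - f (σ' • ξ + y) ≤ |f (σ • ξ + x) - f (σ' • ξ + y)| := le_abs_self _
      _ ≤ ‖x - y + (σ - σ') • ξ‖ := hdiff ▸ lipschitzWith_one_iff_abs_sub_le.1 hf _ _

end WavePacket

theorem distance_between_wave_packets_general
    (m : ℕ)
    (ψ : EuclideanSpace ℝ (Fin m) → ℝ)
    (hψ_nonneg : ∀ ξ, 0 ≤ ψ ξ)
    (hψ_prob : ∫ ξ, ψ ξ = 1)
    (hψ_moment : Integrable (fun ξ => ‖ξ‖ * ψ ξ))
    (x y : EuclideanSpace ℝ (Fin m)) (σ σ' : ℝ) (hσ : 0 < σ) (hσ' : 0 < σ') :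
    (⨆ f : {f : EuclideanSpace ℝ (Fin m) → ℝ // ∀ x y, |f x - f y| ≤ ‖x - y‖},
      ENNReal.ofReal ((∫ ξ, f.1 (σ • ξ + x) * ψ ξ) - ∫ ξ, f.1 (σ' • ξ + y) * ψ ξ)) =
      ENNReal.ofReal (∫ ξ, ‖x - y + (σ - σ') • ξ‖ * ψ ξ) := by
  have hψ : Integrable ψ := .of_integral_ne_zero (by simp [hψ_prob])
  refine le_antisymm (iSup_le fun f => ENNReal.ofReal_le_ofReal <|
    wavePacket_sub_wavePacket_le hψ hψ_moment hψ_nonneg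
      (lipschitzWith_one_iff_abs_sub_le.2 f.2) σ σ' x y) ?_
  obtain ⟨g, hg, hg_eq⟩ := exists_lipschitzWith_one_sub_eq_norm x y hσ.le hσ'.le
  refine le_iSup_of_le ⟨g, lipschitzWith_one_iff_abs_sub_le.1 hg⟩ (le_of_eq ?_)
  change _ = ENNReal.ofReal (wavePacket volume ψ σ x g - wavePacket volume ψ σ' y g)
  simp only [wavePacket_sub_wavePacket hψ hψ_moment hg, hg_eq]

/-- Proposition 5: the spectral (= order-1 Wasserstein) distance between
the wave packets `Ψ_{σ,x}` and `Ψ_{σ',y}` of common shape `ψ` equals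
`∫ ‖x − y + (σ − σ')ξ‖ ψ(ξ) dξ`. -/
theorem distance_between_wave_packets
    (m : ℕ) (hm : 1 ≤ m)
    (ψ : EuclideanSpace ℝ (Fin m) → ℝ)
    (hψ_meas : Measurable ψ) (hψ_nonneg : ∀ ξ, 0 ≤ ψ ξ)
    (hψ_prob : ∫ ξ, ψ ξ = 1)
    (hψ_moment : Integrable (fun ξ => ‖ξ‖ * ψ ξ))
    (x y : EuclideanSpace ℝ (Fin m)) (σ σ' : ℝ) (hσ : 0 < σ) (hσ' : 0 < σ') :
    (⨆ f : {f : EuclideanSpace ℝ (Fin m) → ℝ // ∀ x y, |f x - f y| ≤ ‖x - y‖},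
      ENNReal.ofReal ((∫ ξ, f.1 (σ • ξ + x) * ψ ξ) - ∫ ξ, f.1 (σ' • ξ + y) * ψ ξ)) =
      ENNReal.ofReal (∫ ξ, ‖x - y + (σ - σ') • ξ‖ * ψ ξ) :=
  distance_between_wave_packets_general m ψ hψ_nonneg hψ_prob hψ_moment x y σ σ' hσ hσ'
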